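/- Let R be a commutative ring, let C be a chain complex of R-modules each of which is flat, and suppose C is acyclic. If M is an R-module admitting a finite projective resolution 0 → Pₙ → ⋯ → P₁ → M → 0, then the chain complex C ⊗_R M is acyclic. -/

import Mathlib

open CategoryTheory MonoidalCategory

/-!
Write `K ⊗ M` for `((tensorRight M).mapHomologicalComplex c).obj K`. Since every `K.X i` is flat,
tensoring `K` with `0 → ker ε → P₀ → M → 0` gives a short exact sequence of complexes
`0 → K ⊗ ker ε → K ⊗ P₀ → K ⊗ M → 0`. As `P₀` is flat, `K ⊗ P₀` is acyclic; `ker ε` is resolved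
by `P₁, P₂, …`, one step shorter, so `K ⊗ ker ε` is acyclic by induction on the length. The long
exact homology sequence then makes `K ⊗ M` acyclic.
-/

namespace CategoryTheory.ShortComplex.ShortExact

variable {A : Type*} [Category A] [Abelian A] {ι : Type*} {c : ComplexShape ι}
  {S : ShortComplex (HomologicalComplex A c)}

lemma acyclic_X₃_of_acyclic (hS : S.ShortExact) (h₁ : S.X₁.Acyclic) (h₂ : S.X₂.Acyclic) :
    S.X₃.Acyclic := fun i ↦
  hS.exactAt_X₃ i ((h₂ i).isZero_homology.epi _)
    (fun j _ ↦ ((h₁ j).isZero_homology.mono _))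

end CategoryTheory.ShortComplex.ShortExact

namespace HomologicalComplex

variable {R : Type} [CommRing R] {ι : Type} {c : ComplexShape ι}
  (K : HomologicalComplex (ModuleCat R) c)

lemma exactAt_tensorRight_of_flat (M : ModuleCat R) [Module.Flat R M] {i : ι}
    (h : K.ExactAt i) : (((tensorRight M).mapHomologicalComplex c).obj K).ExactAt i := by
  have e : (((tensorRight M).mapHomologicalComplex c).obj K).sc i ≅ (K.sc i).map (tensorRight M) :=
    ShortComplex.isoMk (Iso.refl _) (Iso.refl _) (Iso.refl _) (by simp; rfl) (by simp; rfl)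
  exact ShortComplex.exact_of_iso e.symm (Module.Flat.rTensor_shortComplex_exact M _ h)

noncomputable def tensorRightShortComplex (S : ShortComplex (ModuleCat R)) :
    ShortComplex (HomologicalComplex (ModuleCat R) c) :=
  ShortComplex.mk ((NatTrans.mapHomologicalComplex ((tensoringRight _).map S.f) c).app K)
    ((NatTrans.mapHomologicalComplex ((tensoringRight _).map S.g) c).app K) (by
      rw [← NatTrans.comp_app, ← NatTrans.mapHomologicalComplex_comp, ← Functor.map_comp, S.zero,
        Functor.map_zero]
      rfl)

lemma shortExact_tensorRightShortComplex (hflat : ∀ i, Module.Flat R (K.X i))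
    {S : ShortComplex (ModuleCat R)} (hS : S.ShortExact) :
    (K.tensorRightShortComplex S).ShortExact := by
  refine shortExact_of_degreewise_shortExact _ fun i ↦ ?_
  have := hflat i
  refine ShortComplex.ShortExact.mk' ?_ ?_ ?_
  · exact Module.Flat.lTensor_shortComplex_exact (K.X i) S hS.exact
  · rw [ModuleCat.mono_iff_injective]
    exact Module.Flat.lTensor_preserves_injective_linearMap (M := K.X i) _
      hS.moduleCat_injective_f
  · rw [ModuleCat.epi_iff_surjective]
    exact LinearMap.lTensor_surjective _ hS.moduleCat_surjective_g

theorem acyclic_tensorRight_of_flat_resolution (hflat : ∀ i, Module.Flat R (K.X i))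
    (hK : K.Acyclic) (n : ℕ) {M : ModuleCat R} (P : ℕ → ModuleCat R)
    [∀ i, Module.Flat R (P i)] (hbound : ∀ i, n ≤ i → Subsingleton (P i))
    (d : ∀ i, P (i + 1) ⟶ P i) (ε : P 0 ⟶ M) (hε : Function.Surjective ε)
    (hex0 : Function.Exact (d 0) ε) (hex : ∀ i, Function.Exact (d (i + 1)) (d i)) :
    (((tensorRight M).mapHomologicalComplex c).obj K).Acyclic := by
  induction n generalizing M P with
  | zero =>
    have := hbound 0 le_rfl
    have : Subsingleton M := hε.subsingleton
    exact fun i ↦ K.exactAt_tensorRight_of_flat M (hK i)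
  | succ n ih =>
    let ε' : P 1 ⟶ ModuleCat.of R (LinearMap.ker ε.hom) :=
      ModuleCat.ofHom ((d 0).hom.codRestrict _ fun x ↦ hex0.apply_apply_eq_zero x)
    have hε' : Function.Surjective ε' := by
      rintro ⟨y, hy⟩
      obtain ⟨x, rfl⟩ := (hex0 y).1 hy
      exact ⟨x, rfl⟩
    have hex0' : Function.Exact (d 1) ε' := LinearMap.exact_iff.2 <|
      (LinearMap.ker_codRestrict _ _ _).trans (LinearMap.exact_iff.1 (hex 0))
    have hker := ih (fun i ↦ P (i + 1)) (fun i hi ↦ hbound (i + 1) (by omega))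
      (fun i ↦ d (i + 1)) ε' hε' hex0' (fun i ↦ hex (i + 1))
    have hP₀ : (((tensorRight (P 0)).mapHomologicalComplex c).obj K).Acyclic :=
      fun i ↦ K.exactAt_tensorRight_of_flat (P 0) (hK i)
    exact (K.shortExact_tensorRightShortComplex hflat
      (LinearMap.shortExact_shortComplexKer hε)).acyclic_X₃_of_acyclic hker hP₀

end HomologicalComplex

theorem stmt1_general {R : Type} [CommRing R] {ι : Type} (c : ComplexShape ι)
    (K : HomologicalComplex (ModuleCat R) c)
    (hflat : ∀ i : ι, Module.Flat R (K.X i))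
    (hacyclic : ∀ i : ι, K.ExactAt i)
    (M : ModuleCat R)
    (n : ℕ) (P : ℕ → ModuleCat R)
    (hproj : ∀ i, Module.Projective R (P i))
    (hbound : ∀ i, n ≤ i → Subsingleton (P i))
    (d : ∀ i, P (i + 1) ⟶ P i) (ε : P 0 ⟶ M)
    (hεsurj : Function.Surjective ⇑ε)
    (hex0 : Function.Exact ⇑(d 0) ⇑ε)
    (hex : ∀ i, Function.Exact ⇑(d (i + 1)) ⇑(d i)) :
    ∀ i : ι, (((tensorRight M).mapHomologicalComplex c).obj K).ExactAt i :=
  K.acyclic_tensorRight_of_flat_resolution hflat hacyclic n P hbound d ε hεsurj hex0 hex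

/-- Let `C` (= `K`) be an acyclic chain complex of flat `R`-modules, and let
`M` be an `R`-module admitting a finite projective resolution
`0 → Pₙ → ⋯ → P₁ → M → 0`.  Then `C ⊗_R M` is acyclic.

The resolution is encoded by modules `P 0, P 1, …` (with `P i = 0` for `i ≥ n`, so the
resolution is finite), projective, with differentials `d i : P (i+1) ⟶ P i` and an
augmentation `ε : P 0 ⟶ M`, exact everywhere and with `ε` surjective. -/
theorem stmt1 {R : Type} [CommRing R] {ι : Type} (c : ComplexShape ι)
    (K : HomologicalComplex (ModuleCat R) c)
    (hflat : ∀ i : ι, Module.Flat R (K.X i))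
    (hacyclic : ∀ i : ι, K.ExactAt i)
    (M : ModuleCat R)
    (n : ℕ) (hn : 1 ≤ n) (P : ℕ → ModuleCat R)
    (hproj : ∀ i, Module.Projective R (P i))
    (hbound : ∀ i, n ≤ i → Subsingleton (P i))
    (d : ∀ i, P (i + 1) ⟶ P i) (ε : P 0 ⟶ M)
    (hεsurj : Function.Surjective ⇑ε)
    (hex0 : Function.Exact ⇑(d 0) ⇑ε)
    (hex : ∀ i, Function.Exact ⇑(d (i + 1)) ⇑(d i)) :
    ∀ i : ι, (((tensorRight M).mapHomologicalComplex c).obj K).ExactAt i :=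
  stmt1_general c K hflat hacyclic M n P hproj hbound d ε hεsurj hex0 hex
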